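/- Let (I_n) be the Markov chain on ℤ≥0 with I_0 = 0, moving from i to i+1 with probability 1-ε_i and staying with probability ε_i, where 1-ε_i ∈ [v_min, v_max] ⊆ (0,1]. Let T(i) = Σ_{ℓ=0}^{i-1} 1/(1-ε_ℓ), κ(n) = sup{i : T(i) ≤ n}, and let N ≥ 1, λ > v_max/v_min. Then Pr{ max_{0 < n ≤ N} |I_n - κ(n)| ≥ λ } ≤ 2 exp( -((λ - v_max/v_min)/v_max)² / (2 N max(1/v_min - 1, 1)²) ). -/

import Mathlib

/-!
The recentred front `Δ n = T (I n) - n` is a martingale: from level `i` the front advances with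
probability `1 - ε i`, and an advance raises `T` by exactly `1 / (1 - ε i)`. Its increments take
the values `-1` and `1 / (1 - ε i) - 1`, so they are bounded by `c = max (1 / v_min - 1) 1`.
Since the increments of `T` lie in `[1 / v_max, 1 / v_min]` and `κ n` inverts `T` at level `n`,
deterministically `|I n - κ n| ≤ v_max |Δ n| + v_max / v_min`; so the event is contained in
`{max_{n ≤ N} |Δ n| ≥ a}` with `a = (λ - v_max / v_min) / v_max`.

That event is controlled by the maximal Azuma–Hoeffding inequality: by the conditional Hoeffding
lemma, `exp (s Δ n)` is a nonnegative submartingale whose mean grows by at most a factor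
`exp (s² c² / 2)` per step, and Doob's maximal inequality with `s = a / (N c²)` gives each tail.
-/

open MeasureTheory Finset Real ProbabilityTheory

section Increments

variable {T : ℕ → ℝ} {δ D : ℝ}

lemma mul_sub_le_sub_of_le_increments (hδ : ∀ i, δ ≤ T (i + 1) - T i) {j m : ℕ} (hjm : j ≤ m) :
    δ * ((m : ℝ) - j) ≤ T m - T j := by
  induction m, hjm using Nat.le_induction with
  | base => simp
  | succ m _ ih => push_cast; linarith [hδ m]

lemma bddAbove_setOf_le (hδ0 : 0 < δ) (hδ : ∀ i, δ ≤ T (i + 1) - T i) (x : ℝ) :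
    BddAbove {i | T i ≤ x} := by
  refine ⟨⌈(x - T 0) / δ⌉₊, fun i (hi : T i ≤ x) ↦ ?_⟩
  have h := mul_sub_le_sub_of_le_increments hδ (Nat.zero_le i)
  rw [Nat.cast_zero, sub_zero] at h
  exact Nat.cast_le.1 ((le_div_iff₀' hδ0).2 (by linarith)|>.trans (Nat.le_ceil _))

lemma le_and_lt_succ_sSup_setOf_le (hδ0 : 0 < δ) (hδ : ∀ i, δ ≤ T (i + 1) - T i) {x : ℝ}
    (hx : T 0 ≤ x) :
    T (sSup {i | T i ≤ x}) ≤ x ∧ x < T (sSup {i | T i ≤ x} + 1) := by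
  have hbdd := bddAbove_setOf_le hδ0 hδ x
  refine ⟨Nat.sSup_mem ⟨0, hx⟩ hbdd, lt_of_not_ge fun hle ↦ ?_⟩
  have := le_csSup hbdd (show sSup {i | T i ≤ x} + 1 ∈ {i | T i ≤ x} from hle)
  omega

lemma mul_abs_sub_sSup_setOf_le_le (hδ0 : 0 < δ)
    (hinc : ∀ i, δ ≤ T (i + 1) - T i ∧ T (i + 1) - T i ≤ D) {x : ℝ} (hx : T 0 ≤ x) (j : ℕ) :
    δ * |(j : ℝ) - sSup {i | T i ≤ x}| ≤ |T j - x| + D := by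
  set k := sSup {i | T i ≤ x}
  obtain ⟨hk, hk'⟩ := le_and_lt_succ_sSup_setOf_le hδ0 (fun i ↦ (hinc i).1) hx
  have hD := (hinc k).2
  rcases le_total k j with hkj | hjk
  · have h := mul_sub_le_sub_of_le_increments (fun i ↦ (hinc i).1) hkj
    rw [abs_of_nonneg (sub_nonneg.2 (Nat.cast_le.2 hkj))]
    linarith [le_abs_self (T j - x)]
  · have h := mul_sub_le_sub_of_le_increments (fun i ↦ (hinc i).1) hjk
    rw [abs_of_nonpos (sub_nonpos.2 (Nat.cast_le.2 hjk))]
    linarith [neg_abs_le (T j - x), (hinc 0).1.trans (hinc 0).2]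

lemma abs_sub_sSup_setOf_le_le {vmin vmax : ℝ} (hvmax : 0 < vmax)
    (hinc : ∀ i, 1 / vmax ≤ T (i + 1) - T i ∧ T (i + 1) - T i ≤ 1 / vmin) {x : ℝ}
    (hx : T 0 ≤ x) (j : ℕ) :
    |(j : ℝ) - sSup {i | T i ≤ x}| ≤ vmax * |T j - x| + vmax / vmin := by
  have h := mul_le_mul_of_nonneg_left
    (mul_abs_sub_sSup_setOf_le_le (one_div_pos.2 hvmax) hinc hx j) hvmax.le
  rwa [← mul_assoc, mul_one_div_cancel hvmax.ne', one_mul, mul_add, mul_one_div] at h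

end Increments

namespace MeasureTheory

section CondHoeffding

variable {Ω : Type*} {m mΩ : MeasurableSpace Ω} {μ : Measure Ω} [IsFiniteMeasure μ]
  {X : Ω → ℝ}

lemma one_le_condExp_exp_mul (hm : m ≤ mΩ) (hX : Integrable X μ) (hX0 : μ[X|m] =ᵐ[μ] 0)
    {s : ℝ} (hexp : Integrable (fun ω ↦ exp (s * X ω)) μ) :
    (fun _ ↦ (1 : ℝ)) ≤ᵐ[μ] μ[fun ω ↦ exp (s * X ω)|m] := by
  have hlin : μ[(fun _ ↦ (1 : ℝ)) + s • X|m] =ᵐ[μ] fun _ ↦ 1 := by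
    filter_upwards [condExp_add (integrable_const 1) (hX.smul s) m, condExp_smul s X m, hX0]
      with ω hadd hsmul hzero
    simp [hadd, hsmul, hzero, condExp_const hm]
  refine hlin.symm.le.trans (condExp_mono ((integrable_const 1).add (hX.smul s)) hexp ?_)
  exact ae_of_all _ fun ω ↦ by simpa [add_comm] using add_one_le_exp (s * X ω)

/-- Conditional form of Hoeffding's lemma. -/
lemma condExp_exp_mul_le (hm : m ≤ mΩ) (hXm : AEMeasurable X μ) {c : ℝ} (hc : 0 < c)
    (hXc : ∀ᵐ ω ∂μ, |X ω| ≤ c) (hX0 : μ[X|m] =ᵐ[μ] 0) (s : ℝ) :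
    μ[fun ω ↦ exp (s * X ω)|m] ≤ᵐ[μ] fun _ ↦ exp (s ^ 2 * c ^ 2 / 2) := by
  have hX : Integrable X μ := Integrable.of_bound hXm.aestronglyMeasurable c
    (by simpa only [Real.norm_eq_abs] using hXc)
  have hexp : Integrable (fun ω ↦ exp (s * X ω)) μ :=
    integrable_exp_mul_of_mem_Icc hXm (hXc.mono fun ω ↦ abs_le.1)
  have hlin : μ[(fun _ ↦ cosh (s * c)) + (sinh (s * c) / c) • X|m] =ᵐ[μ]
      fun _ ↦ cosh (s * c) := by
    filter_upwards [condExp_add (integrable_const _) (hX.smul (sinh (s * c) / c)) m,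
      condExp_smul (sinh (s * c) / c) X m, hX0] with ω hadd hsmul hzero
    rw [hadd, Pi.add_apply, hsmul, Pi.smul_apply, hzero, condExp_const hm]
    simp
  -- `exp (s * x)` lies below its chord over `[-c, c]`.
  have hchord :
      (fun ω ↦ exp (s * X ω)) ≤ᵐ[μ] (fun _ ↦ cosh (s * c)) + (sinh (s * c) / c) • X := by
    filter_upwards [hXc] with ω hω
    have h := exp_mul_le_cosh_add_mul_sinh (t := X ω / c) (x := s * c)
      (by rwa [abs_div, abs_of_pos hc, div_le_one hc])
    rw [show X ω / c * (s * c) = s * X ω by field_simp] at h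
    simp only [Pi.add_apply, Pi.smul_apply, smul_eq_mul]
    linarith [show X ω / c * sinh (s * c) = sinh (s * c) / c * X ω by ring]
  refine (condExp_mono hexp ((integrable_const _).add (hX.smul _)) hchord).trans
    (hlin.le.trans (ae_of_all _ fun _ ↦ ?_))
  exact (cosh_le_exp_half_sq _).trans_eq (by ring_nf)

end CondHoeffding

variable {Ω : Type*} {mΩ : MeasurableSpace Ω} {μ : Measure Ω} {𝒢 : Filtration ℕ mΩ}
  {M : ℕ → Ω → ℝ} {c : ℝ}

lemma ae_abs_le_mul_of_abs_sub_le (hM0 : ∀ᵐ ω ∂μ, M 0 ω = 0)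
    (hinc : ∀ n, ∀ᵐ ω ∂μ, |M (n + 1) ω - M n ω| ≤ c) (n : ℕ) :
    ∀ᵐ ω ∂μ, |M n ω| ≤ n * c := by
  induction n with
  | zero => filter_upwards [hM0] with ω hω using by simp [hω]
  | succ n ih =>
    filter_upwards [ih, hinc n] with ω hn hstep
    have := abs_sub_abs_le_abs_sub (M (n + 1) ω) (M n ω)
    push_cast
    linarith

section FiniteMeasure

variable [IsFiniteMeasure μ]

lemma Martingale.condExp_sub_eq_zero (hM : Martingale M 𝒢 μ) (n : ℕ) :
    μ[M (n + 1) - M n|𝒢 n] =ᵐ[μ] 0 := by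
  filter_upwards [condExp_sub (hM.integrable (n + 1)) (hM.integrable n) (𝒢 n),
    hM.condExp_ae_eq n.le_succ] with ω hsub hsucc
  rw [hsub, Pi.sub_apply, hsucc, condExp_of_stronglyMeasurable (𝒢.le n) (hM.stronglyMeasurable n)
    (hM.integrable n), Pi.zero_apply, sub_self]

lemma Martingale.integrable_exp_mul (hM : Martingale M 𝒢 μ) (hM0 : ∀ᵐ ω ∂μ, M 0 ω = 0)
    (hinc : ∀ n, ∀ᵐ ω ∂μ, |M (n + 1) ω - M n ω| ≤ c) (s : ℝ) (n : ℕ) :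
    Integrable (fun ω ↦ exp (s * M n ω)) μ :=
  integrable_exp_mul_of_mem_Icc (hM.integrable n).aemeasurable
    ((ae_abs_le_mul_of_abs_sub_le hM0 hinc n).mono fun _ ↦ abs_le.1)

lemma Martingale.condExp_exp_mul_succ (hM : Martingale M 𝒢 μ) (hM0 : ∀ᵐ ω ∂μ, M 0 ω = 0)
    (hinc : ∀ n, ∀ᵐ ω ∂μ, |M (n + 1) ω - M n ω| ≤ c) (s : ℝ) (n : ℕ) :
    μ[fun ω ↦ exp (s * M (n + 1) ω)|𝒢 n] =ᵐ[μ]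
      fun ω ↦ exp (s * M n ω) * μ[fun ω ↦ exp (s * (M (n + 1) ω - M n ω))|𝒢 n] ω := by
  have hfactor : (fun ω ↦ exp (s * M (n + 1) ω)) =
      (fun ω ↦ exp (s * M n ω)) * fun ω ↦ exp (s * (M (n + 1) ω - M n ω)) := by
    ext ω; rw [Pi.mul_apply, ← exp_add]; ring_nf
  rw [hfactor]
  refine condExp_mul_of_stronglyMeasurable_left ?_ ?_ ?_
  · exact ((hM.stronglyMeasurable n).measurable.const_mul s).exp.stronglyMeasurable
  · rw [← hfactor]; exact hM.integrable_exp_mul hM0 hinc s (n + 1)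
  · exact integrable_exp_mul_of_mem_Icc
      ((hM.integrable (n + 1)).sub (hM.integrable n)).aemeasurable
      ((hinc n).mono fun _ ↦ abs_le.1)

lemma Martingale.submartingale_exp_mul (hM : Martingale M 𝒢 μ) (hM0 : ∀ᵐ ω ∂μ, M 0 ω = 0)
    (hinc : ∀ n, ∀ᵐ ω ∂μ, |M (n + 1) ω - M n ω| ≤ c) (s : ℝ) :
    Submartingale (fun n ω ↦ exp (s * M n ω)) 𝒢 μ := by
  refine submartingale_nat (fun n ↦ ?_) (hM.integrable_exp_mul hM0 hinc s) fun n ↦ ?_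
  · exact ((hM.stronglyMeasurable n).measurable.const_mul s).exp.stronglyMeasurable
  have hX := (hM.integrable (n + 1)).sub (hM.integrable n)
  filter_upwards [hM.condExp_exp_mul_succ hM0 hinc s n,
    one_le_condExp_exp_mul (𝒢.le n) hX (hM.condExp_sub_eq_zero n)
      (integrable_exp_mul_of_mem_Icc hX.aemeasurable ((hinc n).mono fun _ ↦ abs_le.1))]
    with ω hsucc hone
  rw [hsucc]
  exact le_mul_of_one_le_right (exp_pos _).le hone

lemma Martingale.integral_exp_mul_le (hM : Martingale M 𝒢 μ) (hM0 : ∀ᵐ ω ∂μ, M 0 ω = 0)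
    (hc : 0 < c) (hinc : ∀ n, ∀ᵐ ω ∂μ, |M (n + 1) ω - M n ω| ≤ c) (s : ℝ) (n : ℕ) :
    ∫ ω, exp (s * M n ω) ∂μ ≤ μ.real Set.univ * exp (s ^ 2 * c ^ 2 / 2) ^ n := by
  induction n with
  | zero =>
    rw [integral_congr_ae (g := fun _ ↦ 1) (hM0.mono fun ω hω ↦ by simp [hω])]
    simp
  | succ n ih =>
    have hX := (hM.integrable (n + 1)).sub (hM.integrable n)
    have hstep : μ[fun ω ↦ exp (s * M (n + 1) ω)|𝒢 n] ≤ᵐ[μ]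
        fun ω ↦ exp (s * M n ω) * exp (s ^ 2 * c ^ 2 / 2) := by
      filter_upwards [hM.condExp_exp_mul_succ hM0 hinc s n,
        condExp_exp_mul_le (𝒢.le n) hX.aemeasurable hc (hinc n) (hM.condExp_sub_eq_zero n) s]
        with ω hsucc hle
      rw [hsucc]
      exact mul_le_mul_of_nonneg_left hle (exp_pos _).le
    calc ∫ ω, exp (s * M (n + 1) ω) ∂μ = ∫ ω, μ[fun ω ↦ exp (s * M (n + 1) ω)|𝒢 n] ω ∂μ :=
          (integral_condExp (𝒢.le n)).symm
      _ ≤ ∫ ω, exp (s * M n ω) * exp (s ^ 2 * c ^ 2 / 2) ∂μ :=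
          integral_mono_ae integrable_condExp
            ((hM.integrable_exp_mul hM0 hinc s n).mul_const _) hstep
      _ ≤ μ.real Set.univ * exp (s ^ 2 * c ^ 2 / 2) ^ (n + 1) := by
          rw [integral_mul_const]
          calc _ ≤ _ := mul_le_mul_of_nonneg_right ih (exp_pos _).le
            _ = _ := by ring

lemma Submartingale.mul_measureReal_le_integral {f : ℕ → Ω → ℝ} (hsub : Submartingale f 𝒢 μ)
    (hnonneg : 0 ≤ f) {ε : ℝ} (hε : 0 ≤ ε) (n : ℕ) :
    ε * μ.real {ω | ε ≤ (range (n + 1)).sup' nonempty_range_add_one fun k ↦ f k ω} ≤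
      ∫ ω, f n ω ∂μ := by
  lift ε to NNReal using hε
  have hint_nonneg := setIntegral_nonneg_of_ae (μ := μ) (f := f n)
    (s := {ω | (ε : ℝ) ≤ (range (n + 1)).sup' nonempty_range_add_one fun k ↦ f k ω})
    (ae_of_all _ (hnonneg n))
  calc (ε : ℝ) * μ.real {ω | (ε : ℝ) ≤ (range (n + 1)).sup' nonempty_range_add_one fun k ↦ f k ω}
      ≤ ∫ ω in {ω | (ε : ℝ) ≤ (range (n + 1)).sup' nonempty_range_add_one fun k ↦ f k ω},
          f n ω ∂μ := by
        have h := ENNReal.toReal_mono ENNReal.ofReal_ne_top (maximal_ineq hsub hnonneg (ε := ε) n)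
        rwa [ENNReal.toReal_mul, ENNReal.toReal_ofReal hint_nonneg, ENNReal.coe_toReal] at h
    _ ≤ ∫ ω, f n ω ∂μ := setIntegral_le_integral (hsub.integrable n) (ae_of_all _ (hnonneg n))

end FiniteMeasure

variable [IsProbabilityMeasure μ]

lemma Martingale.measureReal_exists_ge_le_exp_mul (hM : Martingale M 𝒢 μ)
    (hM0 : ∀ᵐ ω ∂μ, M 0 ω = 0) (hc : 0 < c) (hinc : ∀ n, ∀ᵐ ω ∂μ, |M (n + 1) ω - M n ω| ≤ c)
    {s : ℝ} (hs : 0 ≤ s) (a : ℝ) (N : ℕ) :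
    μ.real {ω | ∃ n ≤ N, a ≤ M n ω} ≤ exp (-(s * a)) * exp (s ^ 2 * c ^ 2 / 2) ^ N := by
  set f : ℕ → Ω → ℝ := fun n ω ↦ exp (s * M n ω)
  have hevent : {ω | ∃ n ≤ N, a ≤ M n ω} ⊆
      {ω | exp (s * a) ≤ (range (N + 1)).sup' nonempty_range_add_one fun k ↦ f k ω} := by
    rintro ω ⟨n, hn, hle⟩
    exact (exp_le_exp.2 (mul_le_mul_of_nonneg_left hle hs)).trans
      (le_sup' (fun k ↦ f k ω) (mem_range.2 (Nat.lt_succ_of_le hn)))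
  have hdoob := (hM.submartingale_exp_mul hM0 hinc s).mul_measureReal_le_integral
    (fun n ω ↦ (exp_pos _).le) (exp_pos (s * a)).le N
  have hmgf := hM.integral_exp_mul_le hM0 hc hinc s N
  rw [probReal_univ, one_mul] at hmgf
  calc μ.real {ω | ∃ n ≤ N, a ≤ M n ω}
      ≤ μ.real {ω | exp (s * a) ≤ (range (N + 1)).sup' nonempty_range_add_one fun k ↦ f k ω} :=
        measureReal_mono hevent
    _ ≤ exp (-(s * a)) * exp (s ^ 2 * c ^ 2 / 2) ^ N := by
        rw [exp_neg, ← div_eq_inv_mul, le_div_iff₀' (exp_pos _)]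
        exact hdoob.trans hmgf

/-- Maximal Azuma–Hoeffding inequality. -/
theorem Martingale.measureReal_exists_ge_le (hM : Martingale M 𝒢 μ)
    (hM0 : ∀ᵐ ω ∂μ, M 0 ω = 0) (hc : 0 < c) (hinc : ∀ n, ∀ᵐ ω ∂μ, |M (n + 1) ω - M n ω| ≤ c)
    {a : ℝ} (ha : 0 ≤ a) (N : ℕ) :
    μ.real {ω | ∃ n ≤ N, a ≤ M n ω} ≤ exp (-a ^ 2 / (2 * N * c ^ 2)) := by
  refine (hM.measureReal_exists_ge_le_exp_mul hM0 hc hinc (s := a / (N * c ^ 2))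
    (by positivity) a N).trans_eq ?_
  rw [← exp_nat_mul, ← exp_add]
  congr 1
  rcases N.eq_zero_or_pos with rfl | hN
  · simp
  · field_simp
    ring

theorem Martingale.measureReal_exists_abs_ge_le (hM : Martingale M 𝒢 μ)
    (hM0 : ∀ᵐ ω ∂μ, M 0 ω = 0) (hc : 0 < c) (hinc : ∀ n, ∀ᵐ ω ∂μ, |M (n + 1) ω - M n ω| ≤ c)
    {a : ℝ} (ha : 0 ≤ a) (N : ℕ) :
    μ.real {ω | ∃ n ≤ N, a ≤ |M n ω|} ≤ 2 * exp (-a ^ 2 / (2 * N * c ^ 2)) := by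
  have hneg := hM.neg.measureReal_exists_ge_le (hM0.mono fun ω hω ↦ by simp [hω]) hc
    (fun n ↦ (hinc n).mono fun ω hω ↦ by simp only [Pi.neg_apply, neg_sub_neg]; rwa [abs_sub_comm])
    ha N
  have hevent : {ω | ∃ n ≤ N, a ≤ |M n ω|} ⊆
      {ω | ∃ n ≤ N, a ≤ M n ω} ∪ {ω | ∃ n ≤ N, a ≤ (-M) n ω} := by
    rintro ω ⟨n, hn, hle⟩
    rcases le_abs'.1 hle with h | h
    · exact Or.inr ⟨n, hn, by simp only [Pi.neg_apply]; linarith⟩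
    · exact Or.inl ⟨n, hn, h⟩
  calc μ.real {ω | ∃ n ≤ N, a ≤ |M n ω|} ≤ _ := measureReal_mono hevent
    _ ≤ _ := measureReal_union_le _ _
    _ ≤ 2 * exp (-a ^ 2 / (2 * N * c ^ 2)) := by
        linarith [hM.measureReal_exists_ge_le hM0 hc hinc ha N]

end MeasureTheory

section Front

variable {Ω : Type*} {mΩ : MeasurableSpace Ω} {μ : Measure Ω} {I : ℕ → Ω → ℕ} {p T : ℕ → ℝ}
  {c : ℝ}

def advance (I : ℕ → Ω → ℕ) (n : ℕ) (ω : Ω) : ℝ := if I (n + 1) ω = I n ω + 1 then 1 else 0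

lemma integrable_advance [IsFiniteMeasure μ] (hI : ∀ n, StronglyMeasurable (I n)) (n : ℕ) :
    Integrable (advance I n) μ := by
  refine Integrable.of_bound (Measurable.aestronglyMeasurable ?_) 1
    (ae_of_all _ fun ω ↦ by unfold advance; split_ifs <;> simp)
  exact Measurable.ite (measurableSet_eq_fun (hI (n + 1)).measurable
    ((hI n).measurable.add_const 1)) measurable_const measurable_const

lemma front_sub_eq (hstep : ∀ n, ∀ᵐ ω ∂μ, I (n + 1) ω = I n ω ∨ I (n + 1) ω = I n ω + 1)
    (hT : ∀ i, T (i + 1) = T i + 1 / p i) (n : ℕ) :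
    ∀ᵐ ω ∂μ, (T (I (n + 1) ω) - (n + 1 : ℕ)) - (T (I n ω) - n) =
      1 / p (I n ω) * advance I n ω - 1 := by
  filter_upwards [hstep n] with ω hω
  rcases hω with h | h
  · simp [advance, h]
  · simp [advance, h, hT]
    ring

lemma abs_front_sub_le (hstep : ∀ n, ∀ᵐ ω ∂μ, I (n + 1) ω = I n ω ∨ I (n + 1) ω = I n ω + 1)
    (hT : ∀ i, T (i + 1) = T i + 1 / p i) (hp : ∀ i, |1 / p i - 1| ≤ c) (hc : 1 ≤ c) (n : ℕ) :
    ∀ᵐ ω ∂μ, |(T (I (n + 1) ω) - (n + 1 : ℕ)) - (T (I n ω) - n)| ≤ c := by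
  filter_upwards [front_sub_eq hstep hT n] with ω hω
  rw [hω, advance]
  split_ifs
  · simpa using hp (I n ω)
  · simpa using hc

variable [IsFiniteMeasure μ]

lemma condExp_one_div_mul_advance (hI : ∀ n, StronglyMeasurable (I n))
    (hmarkov : ∀ n, μ[advance I n|Filtration.natural I hI n] =ᵐ[μ] fun ω ↦ p (I n ω))
    (hp0 : ∀ i, p i ≠ 0) (hp : ∀ i, |1 / p i - 1| ≤ c) (n : ℕ) :
    μ[(fun ω ↦ 1 / p (I n ω)) * advance I n|Filtration.natural I hI n] =ᵐ[μ] 1 := by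
  set 𝒢 := Filtration.natural I hI
  have hinv : StronglyMeasurable[𝒢 n] fun ω ↦ 1 / p (I n ω) :=
    (Measurable.of_discrete (f := fun i ↦ 1 / p i).comp
      (Filtration.stronglyAdapted_natural hI n).measurable).stronglyMeasurable
  have hinv_bound : ∀ᵐ ω ∂μ, ‖1 / p (I n ω)‖ ≤ c + 1 := ae_of_all _ fun ω ↦ by
    have := abs_sub_abs_le_abs_sub (1 / p (I n ω)) 1
    rw [Real.norm_eq_abs]
    linarith [hp (I n ω), abs_one (α := ℝ)]
  filter_upwards [condExp_stronglyMeasurable_mul_of_bound (𝒢.le n) hinv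
    (integrable_advance hI n) (c + 1) hinv_bound, hmarkov n] with ω hmul hadv
  rw [hmul, Pi.mul_apply, hadv, one_div_mul_cancel (hp0 _), Pi.one_apply]

theorem martingale_front (hI : ∀ n, StronglyMeasurable (I n)) (h0 : ∀ᵐ ω ∂μ, I 0 ω = 0)
    (hstep : ∀ n, ∀ᵐ ω ∂μ, I (n + 1) ω = I n ω ∨ I (n + 1) ω = I n ω + 1)
    (hmarkov : ∀ n, μ[advance I n|Filtration.natural I hI n] =ᵐ[μ] fun ω ↦ p (I n ω))
    (hp0 : ∀ i, p i ≠ 0) (hp : ∀ i, |1 / p i - 1| ≤ c) (hc : 1 ≤ c)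
    (hT0 : T 0 = 0) (hT : ∀ i, T (i + 1) = T i + 1 / p i) :
    Martingale (fun n ω ↦ T (I n ω) - n) (Filtration.natural I hI) μ := by
  set 𝒢 := Filtration.natural I hI
  have hadapted : StronglyAdapted 𝒢 fun n ω ↦ T (I n ω) - n := fun n ↦
    ((Measurable.of_discrete.comp (Filtration.stronglyAdapted_natural hI n).measurable).sub
      measurable_const).stronglyMeasurable
  have hint (n : ℕ) : Integrable (fun ω ↦ T (I n ω) - n) μ :=
    Integrable.of_bound ((hadapted n).mono (𝒢.le n)).aestronglyMeasurable (n * c) <| by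
      simpa only [Real.norm_eq_abs] using ae_abs_le_mul_of_abs_sub_le
        (M := fun n ω ↦ T (I n ω) - n) (h0.mono fun ω hω ↦ by simp [hω, hT0])
        (abs_front_sub_le hstep hT hp hc) n
  refine martingale_of_condExp_sub_eq_zero_nat hadapted hint fun n ↦ ?_
  have hprod : Integrable ((fun ω ↦ 1 / p (I n ω)) * advance I n) μ :=
    ((hint (n + 1)).sub (hint n)).add (integrable_const 1) |>.congr <| by
      filter_upwards [front_sub_eq hstep hT n] with ω hω
      simp only [Pi.add_apply, Pi.sub_apply, Pi.mul_apply, hω, sub_add_cancel]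
  filter_upwards [condExp_congr_ae (m := 𝒢 n) (front_sub_eq (μ := μ) hstep hT n),
    condExp_sub hprod (integrable_const (1 : ℝ)) (𝒢 n),
    condExp_one_div_mul_advance hI hmarkov hp0 hp n] with ω h1 h2 h3
  rw [Pi.zero_apply, ← sub_self (1 : ℝ)]
  exact h1.trans (h2.trans (by rw [Pi.sub_apply, h3, condExp_const (𝒢.le n), Pi.one_apply]))

end Front

lemma abs_one_div_sub_one_le_max {v q : ℝ} (hv : 0 < v) (hq : v ≤ q) :
    |1 / q - 1| ≤ max (1 / v - 1) 1 := by
  refine abs_le.2 ⟨?_, ?_⟩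
  · linarith [le_max_right (1 / v - 1) 1, one_div_pos.2 (hv.trans_le hq)]
  · linarith [le_max_left (1 / v - 1) 1, one_div_le_one_div_of_le hv hq]

theorem stmt_8_general {Ω : Type*} {mΩ : MeasurableSpace Ω} {μ : Measure Ω} [IsProbabilityMeasure μ]
    (ε : ℕ → ℝ) (vmin vmax : ℝ)
    (hvmin : 0 < vmin)
    (hbounds : ∀ i, vmin ≤ 1 - ε i ∧ 1 - ε i ≤ vmax)
    (I : ℕ → Ω → ℕ) (hI : ∀ n, StronglyMeasurable (I n))
    (h0 : ∀ᵐ ω ∂μ, I 0 ω = 0)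
    (hstep : ∀ n, ∀ᵐ ω ∂μ, I (n + 1) ω = I n ω ∨ I (n + 1) ω = I n ω + 1)
    (hmarkov : ∀ n,
      μ[(fun ω => if I (n + 1) ω = I n ω + 1 then (1 : ℝ) else 0) |
          (MeasureTheory.Filtration.natural I hI) n]
        =ᵐ[μ] fun ω => 1 - ε (I n ω))
    (T : ℕ → ℝ) (hT : ∀ i, T i = ∑ ℓ ∈ Finset.range i, 1 / (1 - ε ℓ))
    (κ : ℕ → ℕ) (hκ : ∀ n, κ n = sSup {i : ℕ | T i ≤ (n : ℝ)})
    (N : ℕ) (lam : ℝ) (hlam : vmax / vmin < lam) :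
    (μ {ω | ∃ n ∈ Finset.Icc 1 N, lam ≤ |(I n ω : ℝ) - κ n|}).toReal ≤
      2 * Real.exp (-((lam - vmax / vmin) / vmax) ^ 2 /
        (2 * N * max (1 / vmin - 1) 1 ^ 2)) := by
  have hp (i : ℕ) : 0 < 1 - ε i := hvmin.trans_le (hbounds i).1
  have hvmax_pos : 0 < vmax := hvmin.trans_le ((hbounds 0).1.trans (hbounds 0).2)
  have hT0 : T 0 = 0 := by simp [hT]
  have hTsucc (i : ℕ) : T (i + 1) = T i + 1 / (1 - ε i) := by simp only [hT, sum_range_succ]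
  have hTinc (i : ℕ) : 1 / vmax ≤ T (i + 1) - T i ∧ T (i + 1) - T i ≤ 1 / vmin := by
    rw [hTsucc, add_sub_cancel_left]
    exact ⟨one_div_le_one_div_of_le (hp i) (hbounds i).2,
      one_div_le_one_div_of_le hvmin (hbounds i).1⟩
  have hc : 1 ≤ max (1 / vmin - 1) 1 := le_max_right _ _
  have hpc (i : ℕ) := abs_one_div_sub_one_le_max hvmin (hbounds i).1
  have hΔ := martingale_front (p := fun i ↦ 1 - ε i) hI h0 hstep hmarkov (fun i ↦ (hp i).ne')
    hpc hc hT0 hTsucc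
  have hevent : {ω | ∃ n ∈ Icc 1 N, lam ≤ |(I n ω : ℝ) - κ n|} ⊆
      {ω | ∃ n ≤ N, (lam - vmax / vmin) / vmax ≤ |T (I n ω) - n|} := by
    rintro ω ⟨n, hn, hle⟩
    refine ⟨n, (mem_Icc.1 hn).2, ?_⟩
    have h := abs_sub_sSup_setOf_le_le hvmax_pos hTinc (x := n) (by rw [hT0]; positivity) (I n ω)
    rw [← hκ n] at h
    rw [div_le_iff₀ hvmax_pos]
    linarith
  calc (μ {ω | ∃ n ∈ Icc 1 N, lam ≤ |(I n ω : ℝ) - κ n|}).toReal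
      ≤ μ.real {ω | ∃ n ≤ N, (lam - vmax / vmin) / vmax ≤ |T (I n ω) - n|} :=
        measureReal_mono hevent
    _ ≤ _ := hΔ.measureReal_exists_abs_ge_le (h0.mono fun ω hω ↦ by simp [hω, hT0])
        (by positivity) (abs_front_sub_le hstep hTsucc hpc hc)
        (div_nonneg (sub_nonneg.2 hlam.le) hvmax_pos.le) N

/-- Concentration of the front around `κ`: for the heterogeneous forward Markov chain `I`
with forward probabilities `1 - ε i ∈ [v_min, v_max] ⊆ (0,1]`, `N ≥ 1` and
`λ > v_max/v_min`,
`Pr{max_{0<n≤N} |I_n - κ(n)| ≥ λ} ≤ 2 exp(-((λ - v_max/v_min)/v_max)²/(2N·max(1/v_min-1,1)²))`. -/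
theorem stmt_8 {Ω : Type*} {mΩ : MeasurableSpace Ω} {μ : Measure Ω} [IsProbabilityMeasure μ]
    (ε : ℕ → ℝ) (vmin vmax : ℝ)
    (hvmin : 0 < vmin) (hvmax : vmax ≤ 1)
    (hbounds : ∀ i, vmin ≤ 1 - ε i ∧ 1 - ε i ≤ vmax)
    (I : ℕ → Ω → ℕ) (hI : ∀ n, StronglyMeasurable (I n))
    (h0 : ∀ᵐ ω ∂μ, I 0 ω = 0)
    (hstep : ∀ n, ∀ᵐ ω ∂μ, I (n + 1) ω = I n ω ∨ I (n + 1) ω = I n ω + 1)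
    (hmarkov : ∀ n,
      μ[(fun ω => if I (n + 1) ω = I n ω + 1 then (1 : ℝ) else 0) |
          (MeasureTheory.Filtration.natural I hI) n]
        =ᵐ[μ] fun ω => 1 - ε (I n ω))
    (T : ℕ → ℝ) (hT : ∀ i, T i = ∑ ℓ ∈ Finset.range i, 1 / (1 - ε ℓ))
    (κ : ℕ → ℕ) (hκ : ∀ n, κ n = sSup {i : ℕ | T i ≤ (n : ℝ)})
    (N : ℕ) (hN : 1 ≤ N) (lam : ℝ) (hlam : vmax / vmin < lam) :
    (μ {ω | ∃ n ∈ Finset.Icc 1 N, lam ≤ |(I n ω : ℝ) - κ n|}).toReal ≤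
      2 * Real.exp (-((lam - vmax / vmin) / vmax) ^ 2 /
        (2 * N * max (1 / vmin - 1) 1 ^ 2)) :=
  stmt_8_general (mΩ := mΩ) ε vmin vmax hvmin hbounds I hI h0 hstep hmarkov T hT κ hκ N lam hlam
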